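/- arXiv:1909.03693 — 9 statements merged into one kernel-verified Lean document; each statement's English description precedes it below -/
import Mathlib

section
/- Let F be a field of characteristic 0, n ≥ 0, and a_i, x_i ∈ F for 1 ≤ i ≤ n. If ∑_{i=1}^n a_i x_i^j = 0 for all 0 ≤ j < n, then for any function f : F → F, ∑_{i=1}^n a_i f(x_i) = 0. -/
theorem stmt_0 (F : Type*) [Field F] [CharZero F] (n : ℕ) (a x : Fin n → F)
    (h : ∀ j : ℕ, j < n → ∑ i, a i * x i ^ j = 0) (f : F → F) :
    ∑ i, a i * f (x i) = 0 := by
  classical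
  set s := Finset.image x Finset.univ with hs
  have hinj : Set.InjOn (id : F → F) (↑s : Set F) := Function.injective_id.injOn
  set p := Lagrange.interpolate s id f with hp
  have hcard : s.card ≤ n := le_trans Finset.card_image_le (by simp)
  have hdeg : p.natDegree < n ∨ p = 0 := by
    by_cases h0 : p = 0
    · exact Or.inr h0
    · left
      have := Lagrange.degree_interpolate_lt f hinj
      rw [← hp] at this
      have h2 : p.degree < (n : ℕ∞) := lt_of_lt_of_le this (Nat.cast_le.2 hcard)
      exact (Polynomial.natDegree_lt_iff_degree_lt h0).2 h2
  have heval : ∀ i, p.eval (x i) = f (x i) := fun i =>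
    Lagrange.eval_interpolate_at_node f hinj (Finset.mem_image_of_mem x (Finset.mem_univ i))
  have hdeg' : ∀ i, p.eval (x i) = ∑ j ∈ Finset.range n, p.coeff j * x i ^ j := by
    intro i
    rcases hdeg with hd | hd
    · exact Polynomial.eval_eq_sum_range' hd _
    · have hn : 0 < n := i.pos
      rw [hd]; simp
  calc ∑ i, a i * f (x i) = ∑ i, a i * ∑ j ∈ Finset.range n, p.coeff j * x i ^ j := by
        simp_rw [← heval, hdeg']
    _ = ∑ j ∈ Finset.range n, p.coeff j * ∑ i, a i * x i ^ j := by
        simp_rw [Finset.mul_sum]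
        rw [Finset.sum_comm]
        congr 1; ext i; congr 1; ext j; ring
    _ = 0 := by
        apply Finset.sum_eq_zero
        intro j hj
        rw [h j (Finset.mem_range.1 hj), mul_zero]
end

section
/- Let F be a field, n ≥ 1, and a_i, x_i ∈ F for 1 ≤ i ≤ n. Suppose ∑_{i=1}^n a_i x_i^j = 0 for all 1 ≤ j ≤ n (note: exponents start at 1). Then for any function f : F → F with f(0) = 0, we have ∑_{i=1}^n a_i f(x_i) = 0. -/
open Polynomial Finset

theorem stmt_2 (F : Type*) [Field F] (n : ℕ) (hn : 1 ≤ n) (a x : Fin n → F)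
    (h : ∀ j : ℕ, 1 ≤ j → j ≤ n → ∑ i, a i * x i ^ j = 0) (f : F → F) (hf : f 0 = 0) :
    ∑ i, a i * f (x i) = 0 := by
  classical
  set s : Finset F := (Finset.univ.image x).erase 0 with hs
  have hscard : s.card ≤ n := by
    calc s.card ≤ (Finset.univ.image x).card := Finset.card_erase_le
    _ ≤ (Finset.univ : Finset (Fin n)).card := Finset.card_image_le
    _ = n := by simp
  have key : ∀ v ∈ s, ∑ i ∈ Finset.univ.filter (fun i => x i = v), a i = 0 := by
    intro v hv
    have hv0 : v ≠ 0 := Finset.ne_of_mem_erase hv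
    have hinj : Set.InjOn id (s : Set F) := Function.injective_id.injOn
    set q : F[X] := Lagrange.basis s id v with hq
    set p : F[X] := X * q with hp
    have hscard1 : 1 ≤ s.card := Finset.card_pos.mpr ⟨v, hv⟩
    have hdeg : p.natDegree ≤ n := by
      have hq' : q.natDegree = s.card - 1 := Lagrange.natDegree_basis hinj hv
      have h2 : p.natDegree ≤ X.natDegree + q.natDegree := natDegree_mul_le
      rw [natDegree_X, hq'] at h2
      omega
    have hcoeff0 : p.coeff 0 = 0 := by simp [hp]
    have hevalv : p.eval v = v := by
      simp [hp, hq]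
      have := Lagrange.eval_basis_self hinj hv
      simp at this
      simp [this]
    have hevalw : ∀ i : Fin n, x i ≠ v → p.eval (x i) = 0 := by
      intro i hxi
      by_cases hx0 : x i = 0
      · simp [hp, hx0]
      · have hmem : x i ∈ s := Finset.mem_erase.mpr ⟨hx0, Finset.mem_image_of_mem x (Finset.mem_univ i)⟩
        have := Lagrange.eval_basis_of_ne (v := id) (Ne.symm hxi) hmem
        simp at this
        simp [hp, hq, this]
    have hsum1 : ∑ i, a i * p.eval (x i) = 0 := by
      have heval : ∀ i : Fin n, p.eval (x i) = ∑ j ∈ Finset.range (n+1), p.coeff j * x i ^ j :=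
        fun i => eval_eq_sum_range' (lt_of_le_of_lt hdeg (Nat.lt_succ_self n)) _
      calc ∑ i, a i * p.eval (x i)
          = ∑ j ∈ Finset.range (n+1), p.coeff j * ∑ i, a i * x i ^ j := by
            simp_rw [heval, Finset.mul_sum]
            rw [Finset.sum_comm]
            apply Finset.sum_congr rfl
            intro j _
            apply Finset.sum_congr rfl
            intro i _
            ring
        _ = 0 := by
            apply Finset.sum_eq_zero
            intro j hj
            rcases Nat.eq_zero_or_pos j with hj0 | hj1
            · simp [hj0, hcoeff0]
            · rw [h j hj1 (by simp at hj; omega), mul_zero]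
    have hsum2 : ∑ i, a i * p.eval (x i)
        = (∑ i ∈ Finset.univ.filter (fun i => x i = v), a i) * v := by
      rw [Finset.sum_mul]
      rw [Finset.sum_filter]
      apply Finset.sum_congr rfl
      intro i _
      by_cases hxi : x i = v
      · simp [hxi, hevalv]
      · simp [hxi, hevalw i hxi]
    have := hsum2 ▸ hsum1
    exact (mul_eq_zero.mp this).resolve_right hv0
  rw [← Finset.sum_fiberwise_of_maps_to (g := x) (t := Finset.univ.image x)
    (fun i _ => Finset.mem_image_of_mem x (Finset.mem_univ i))]
  apply Finset.sum_eq_zero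
  intro v hv
  have : ∑ i ∈ Finset.univ.filter (fun i => x i = v), a i * f (x i)
      = (∑ i ∈ Finset.univ.filter (fun i => x i = v), a i) * f v := by
    rw [Finset.sum_mul]
    apply Finset.sum_congr rfl
    intro i hi
    rw [(Finset.mem_filter.mp hi).2]
  rw [this]
  by_cases hv0 : v = 0
  · simp [hv0, hf]
  · rw [key v (Finset.mem_erase.mpr ⟨hv0, hv⟩), zero_mul]
end

section
/- Let F be a field, I a finite index set, s ≥ 1, and a_i ∈ F, b_{ij} ∈ F for i ∈ I, j ∈ [s]. Partition I into equivalence classes I_1, …, I_p where i, i' are equivalent iff b_{ij} = b_{i'j} for all j ∈ [s]. If ∑_{i∈I} a_i ∏_{j∈[s]} b_{ij}^{ℓ_j} = 0 for all choices of exponents 0 ≤ ℓ_j < |I|, then ∑_{i∈I_ℓ} a_i = 0 for every ℓ ∈ [p]. -/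
open MvPolynomial in
open scoped Classical in
theorem stmt_3 (F : Type*) [Field F] (I : Type*) [Fintype I] (s : ℕ) (hs : 1 ≤ s)
    (a : I → F) (b : I → Fin s → F)
    (h : ∀ ℓ : Fin s → ℕ, (∀ j, ℓ j < Fintype.card I) →
      ∑ i, a i * ∏ j, b i j ^ ℓ j = 0)
    (i₀ : I) :
    ∑ i ∈ Finset.univ.filter (fun i => ∀ j, b i j = b i₀ j), a i = 0 := by
  have hcard : 0 < Fintype.card I := Fintype.card_pos_iff.mpr ⟨i₀⟩
  -- Key lemma: evaluation of any polynomial with small degrees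
  have key : ∀ P : MvPolynomial (Fin s) F, (∀ j, P.degreeOf j < Fintype.card I) →
      ∑ i, a i * eval (b i) P = 0 := by
    intro P hP
    have : ∀ i : I, a i * eval (b i) P
        = ∑ d ∈ P.support, P.coeff d * (a i * ∏ j, b i j ^ d j) := by
      intro i
      rw [eval_eq' (b i) P, Finset.mul_sum]
      apply Finset.sum_congr rfl
      intro d _
      ring
    rw [Finset.sum_congr rfl (fun i _ => this i), Finset.sum_comm]
    apply Finset.sum_eq_zero
    intro d hd
    rw [← Finset.mul_sum, h (fun j => d j) (fun j => by
      have := (degreeOf_lt_iff hcard).mp (hP j) d hd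
      exact this), mul_zero]
  -- distinct b-values other than b i₀
  set V : Finset (Fin s → F) := (Finset.univ.image (fun i => b i)).erase (b i₀) with hV
  have hVcard : V.card < Fintype.card I := by
    have h1 : b i₀ ∈ Finset.univ.image (fun i => b i) :=
      Finset.mem_image.mpr ⟨i₀, Finset.mem_univ _, rfl⟩
    have h2 : V.card < (Finset.univ.image (fun i => b i)).card :=
      Finset.card_erase_lt_of_mem h1
    calc V.card < (Finset.univ.image (fun i => b i)).card := h2
      _ ≤ Finset.univ.card := Finset.card_image_le
      _ = Fintype.card I := Finset.card_univ
  -- for each v ∈ V choose a separating coordinate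
  have hsep : ∀ v ∈ V, ∃ j, v j ≠ b i₀ j := by
    intro v hv
    by_contra hc
    push_neg at hc
    exact (Finset.ne_of_mem_erase hv) (funext hc)
  have : Nonempty (Fin s) := ⟨⟨0, hs⟩⟩
  choose! jv hjv using hsep
  set f : (Fin s → F) → MvPolynomial (Fin s) F :=
    fun v => C ((b i₀ (jv v) - v (jv v))⁻¹) * (X (jv v) - C (v (jv v))) with hf
  set P : MvPolynomial (Fin s) F := ∏ v ∈ V, f v with hPdef
  have hdeg : ∀ j, P.degreeOf j < Fintype.card I := by
    intro j
    calc P.degreeOf j ≤ ∑ v ∈ V, (f v).degreeOf j := degreeOf_prod_le j V f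
      _ ≤ ∑ _v ∈ V, 1 := by
          apply Finset.sum_le_sum
          intro v _
          calc (f v).degreeOf j
              ≤ (C ((b i₀ (jv v) - v (jv v))⁻¹) : MvPolynomial (Fin s) F).degreeOf j
                + (X (jv v) - C (v (jv v)) : MvPolynomial (Fin s) F).degreeOf j :=
                degreeOf_mul_le _ _ _
            _ = (X (jv v) - C (v (jv v)) : MvPolynomial (Fin s) F).degreeOf j := by
                rw [degreeOf_C, zero_add]
            _ ≤ max ((X (jv v) : MvPolynomial (Fin s) F).degreeOf j)
                ((C (v (jv v)) : MvPolynomial (Fin s) F).degreeOf j) :=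
                degreeOf_sub_le _ _ _
            _ ≤ 1 := by
                rw [degreeOf_C, degreeOf_X]
                split <;> simp
      _ = V.card := by simp
      _ < Fintype.card I := hVcard
  have hev : ∀ i : I, eval (b i) P = if (∀ j, b i j = b i₀ j) then 1 else 0 := by
    intro i
    split
    · next heq =>
      have hbi : b i = b i₀ := funext heq
      rw [hPdef, map_prod]
      apply Finset.prod_eq_one
      intro v hv
      have hne : b i₀ (jv v) - v (jv v) ≠ 0 := sub_ne_zero.mpr (Ne.symm (hjv v hv))
      simp [hf, hbi, inv_mul_cancel₀ hne]
    · next hne =>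
      have hbi : b i ∈ V := by
        refine Finset.mem_erase.mpr ⟨?_, Finset.mem_image.mpr ⟨i, Finset.mem_univ _, rfl⟩⟩
        intro hc
        exact hne (fun j => congrFun hc j)
      rw [hPdef, map_prod]
      apply Finset.prod_eq_zero hbi
      simp [hf]
  have := key P hdeg
  rw [Finset.sum_congr rfl (fun i _ => by rw [hev i])] at this
  rw [← this]
  rw [Finset.sum_filter]
  apply Finset.sum_congr rfl
  intro i _
  split <;> simp
end

section
/- Let F be a field, I a finite index set, s ≥ 1, and a_i ∈ F, b_{ij} ∈ F for i ∈ I, j ∈ [s]. Suppose the tuples (b_{ij})_{j∈[s]} ∈ F^s are pairwise distinct for distinct i ∈ I. If ∑_{i∈I} a_i ∏_{j∈[s]} b_{ij}^{ℓ_j} = 0 for all exponent tuples with 0 ≤ ℓ_j < |I|, then a_i = 0 for every i ∈ I. -/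
theorem stmt_4 (F : Type*) [Field F] (I : Type*) [Fintype I] (s : ℕ) (hs : 1 ≤ s)
    (a : I → F) (b : I → Fin s → F)
    (hdist : Function.Injective b)
    (h : ∀ ℓ : Fin s → ℕ, (∀ j, ℓ j < Fintype.card I) →
      ∑ i, a i * ∏ j, b i j ^ ℓ j = 0) :
    ∀ i, a i = 0 := by
  classical
  intro i
  have hsne : Nonempty (Fin s) := ⟨⟨0, hs⟩⟩
  -- choose a separating coordinate for each k
  have hj : ∀ k : I, k ≠ i → ∃ j, b k j ≠ b i j := by
    intro k hk
    by_contra hc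
    push_neg at hc
    exact hk (hdist (funext hc))
  set jf : I → Fin s := fun k =>
    if hk : ∃ j, b k j ≠ b i j then hk.choose else Classical.arbitrary _ with hjf
  have hjne : ∀ k : I, k ≠ i → b k (jf k) ≠ b i (jf k) := by
    intro k hk
    have he := hj k hk
    simp only [hjf, dif_pos he]
    exact he.choose_spec
  set P : MvPolynomial (Fin s) F :=
    ∏ k ∈ Finset.univ.erase i,
      MvPolynomial.C ((b i (jf k) - b k (jf k))⁻¹) *
        (MvPolynomial.X (jf k) - MvPolynomial.C (b k (jf k))) with hP
  have hcard : 0 < Fintype.card I := Fintype.card_pos_iff.mpr ⟨i⟩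
  -- degree bound
  have hdeg : P.totalDegree < Fintype.card I := by
    have h1 : P.totalDegree ≤ ∑ k ∈ Finset.univ.erase i,
        (MvPolynomial.C ((b i (jf k) - b k (jf k))⁻¹) *
          (MvPolynomial.X (jf k) - MvPolynomial.C (b k (jf k)))).totalDegree :=
      MvPolynomial.totalDegree_finset_prod _ _
    have h2 : ∀ k ∈ Finset.univ.erase i,
        (MvPolynomial.C ((b i (jf k) - b k (jf k))⁻¹) *
          (MvPolynomial.X (jf k) - MvPolynomial.C (b k (jf k)))).totalDegree ≤ 1 := by
      intro k _
      calc (MvPolynomial.C ((b i (jf k) - b k (jf k))⁻¹) *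
          (MvPolynomial.X (jf k) - MvPolynomial.C (b k (jf k)))).totalDegree
          ≤ (MvPolynomial.C ((b i (jf k) - b k (jf k))⁻¹)).totalDegree +
            (MvPolynomial.X (jf k) - MvPolynomial.C (b k (jf k))).totalDegree :=
            MvPolynomial.totalDegree_mul _ _
        _ ≤ 0 + 1 := by
            refine add_le_add (le_of_eq (MvPolynomial.totalDegree_C _)) ?_
            refine le_trans (MvPolynomial.totalDegree_sub _ _) ?_
            simp [MvPolynomial.totalDegree_X]
        _ = 1 := by ring
    calc P.totalDegree ≤ ∑ k ∈ Finset.univ.erase i, 1 :=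
          le_trans h1 (Finset.sum_le_sum h2)
      _ = Fintype.card I - 1 := by
          rw [Finset.sum_const, smul_eq_mul, mul_one,
            Finset.card_erase_of_mem (Finset.mem_univ i), Finset.card_univ]
      _ < Fintype.card I := Nat.sub_lt hcard one_pos
  -- L(P) = 0 by expanding into monomials
  have hL : ∑ k, a k * MvPolynomial.eval (b k) P = 0 := by
    have : ∀ k, MvPolynomial.eval (b k) P =
        ∑ d ∈ P.support, P.coeff d * ∏ j, b k j ^ d j :=
      fun k => MvPolynomial.eval_eq' (b k) P
    simp only [this, Finset.mul_sum]
    rw [Finset.sum_comm]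
    refine Finset.sum_eq_zero fun d hd => ?_
    have hdj : ∀ j, d j < Fintype.card I := by
      intro j
      refine lt_of_le_of_lt (le_trans ?_ (MvPolynomial.le_totalDegree hd)) hdeg
      rcases Nat.eq_zero_or_pos (d j) with h0 | h0
      · simp [h0]
      · exact Finset.single_le_sum (fun _ _ => Nat.zero_le _)
          (Finsupp.mem_support_iff.mpr (Nat.pos_iff_ne_zero.mp h0))
    have := h (fun j => d j) hdj
    calc ∑ k, a k * (P.coeff d * ∏ j, b k j ^ d j)
        = P.coeff d * ∑ k, a k * ∏ j, b k j ^ d j := by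
          rw [Finset.mul_sum]; congr 1; funext k; ring
      _ = 0 := by rw [this, mul_zero]
  -- evaluate P at points
  have hevali : MvPolynomial.eval (b i) P = 1 := by
    rw [hP]
    rw [map_prod]
    refine Finset.prod_eq_one fun k hk => ?_
    have hk' : k ≠ i := (Finset.mem_erase.mp hk).1
    simp only [map_mul, map_sub, MvPolynomial.eval_C, MvPolynomial.eval_X]
    exact inv_mul_cancel₀ (sub_ne_zero.mpr (hjne k hk').symm)
  have hevalk : ∀ k, k ≠ i → MvPolynomial.eval (b k) P = 0 := by
    intro k hk
    rw [hP, map_prod]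
    refine Finset.prod_eq_zero (Finset.mem_erase.mpr ⟨hk, Finset.mem_univ k⟩) ?_
    simp only [map_mul, map_sub, MvPolynomial.eval_C, MvPolynomial.eval_X]
    simp
  have : ∑ k, a k * MvPolynomial.eval (b k) P = a i := by
    rw [Finset.sum_eq_single i]
    · rw [hevali, mul_one]
    · intro k _ hk; rw [hevalk k hk, mul_zero]
    · intro hi; exact absurd (Finset.mem_univ i) hi
  rw [hL] at this
  exact this.symm
end

section
/- Let F be a field, n ≥ 2, r ≥ 0. For each 1 ≤ j ≤ n let x_{1,j}, …, x_{r,j} ∈ F^{I_j} be r linearly independent vectors, and let a_1, …, a_r ∈ F \ {0}. Then the tensor A = ∑_{i=1}^r a_i x_{i,1} ⊗ ⋯ ⊗ x_{i,n} has tensor rank exactly r. -/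
open scoped TensorProduct

open Matrix

lemma exists_dual_family {F : Type*} [Field F] {V : Type*} [AddCommGroup V] [Module F V]
    {ι : Type*} [DecidableEq ι] (v : ι → V) (h : LinearIndependent F v) :
    ∃ e : ι → (V →ₗ[F] F), ∀ i k, e i (v k) = if i = k then 1 else 0 := by
  classical
  set S := Submodule.span F (Set.range v) with hS
  let b : Module.Basis ι F S := Module.Basis.span h
  obtain ⟨q, hq⟩ := S.exists_isCompl
  refine ⟨fun i => (b.coord i) ∘ₗ (S.linearProjOfIsCompl q hq), fun i k => ?_⟩
  have hm : v k ∈ S := Submodule.subset_span ⟨k, rfl⟩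
  have h2 : (⟨v k, hm⟩ : S) = b k := (Module.Basis.span_apply h k).symm
  have h1 : S.linearProjOfIsCompl q hq (v k) = b k :=
    (Submodule.linearProjOfIsCompl_apply_left hq (⟨v k, hm⟩ : S)).trans h2
  rw [LinearMap.comp_apply, h1, Module.Basis.coord_apply, Module.Basis.repr_self]
  simp [Finsupp.single_apply, eq_comm]

theorem stmt_8 (F : Type*) [Field F] (n r : ℕ) (hn : 2 ≤ n)
    (I : Fin n → Type*) (x : Fin r → (j : Fin n) → (I j → F))
    (hli : ∀ j : Fin n, LinearIndependent F (fun i : Fin r => x i j))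
    (a : Fin r → F) (ha : ∀ i, a i ≠ 0) :
    IsLeast {s : ℕ | ∃ y : Fin s → (j : Fin n) → (I j → F),
        (∑ i : Fin r, a i • ⨂ₜ[F] j, x i j) = ∑ t : Fin s, ⨂ₜ[F] j, y t j} r := by
  classical
  have h0n : (0:ℕ) < n := by omega
  have h1n : (1:ℕ) < n := by omega
  set j0 : Fin n := ⟨0, h0n⟩ with hj0
  set j1 : Fin n := ⟨1, h1n⟩ with hj1
  have hjj : j0 ≠ j1 := by simp [hj0, hj1, Fin.ext_iff]
  constructor
  · -- membership : the tensor is a sum of r simple tensors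
    refine ⟨fun i j => if j = j0 then a i • x i j else x i j, ?_⟩
    refine Finset.sum_congr rfl fun i _ => ?_
    have h2 : (fun j => if j = j0 then a i • x i j else x i j)
        = Function.update (x i) j0 (a i • x i j0) := by
      funext j
      by_cases h : j = j0
      · subst h; simp
      · simp [Function.update_of_ne h, h]
    calc a i • ((⨂ₜ[F] j, x i j))
        = a i • ((PiTensorProduct.tprod F) (Function.update (x i) j0 (x i j0))) := by
          rw [Function.update_eq_self]
      _ = (PiTensorProduct.tprod F) (Function.update (x i) j0 (a i • x i j0)) :=
          ((PiTensorProduct.tprod F).map_update_smul (x i) j0 (a i) (x i j0)).symm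
      _ = _ := by rw [← h2]
  · -- lower bound
    rintro s ⟨y, hy⟩
    choose e he using fun j => exists_dual_family (fun i => x i j) (hli j)
    set f : Fin r → Fin r → ((j : Fin n) → ((I j → F) →ₗ[F] F)) :=
      fun i k j => if j = j1 then e j k else e j i with hf
    set φ : Fin r → Fin r → ((⨂[F] j, (I j → F)) →ₗ[F] F) :=
      fun i k => PiTensorProduct.lift
        ((MultilinearMap.mkPiAlgebra F (Fin n) F).compLinearMap (f i k)) with hφ
    have hφt : ∀ i k (m : (j : Fin n) → I j → F),
        φ i k ((PiTensorProduct.tprod F) m) = ∏ j, (f i k j) (m j) := by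
      intro i k m
      simp [hφ, PiTensorProduct.lift.tprod]
    have hsplit : ∀ i k (m : (j : Fin n) → I j → F),
        (∏ j, (f i k j) (m j))
          = (e j1 k) (m j1) * ∏ j ∈ Finset.univ.erase j1, (e j i) (m j) := by
      intro i k m
      rw [← Finset.mul_prod_erase Finset.univ (fun j => (f i k j) (m j))
        (Finset.mem_univ j1)]
      have e1 : (f i k j1) (m j1) = (e j1 k) (m j1) := by simp [hf]
      have e2 : ∀ j ∈ Finset.univ.erase j1, (f i k j) (m j) = (e j i) (m j) := by
        intro j hj
        simp [hf, (Finset.mem_erase.1 hj).1]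
      rw [e1, Finset.prod_congr rfl e2]
    -- value on the given tensor
    have key : ∀ i k m, (∏ j, (f i k j) (x m j))
        = (if i = m then 1 else 0) * (if k = m then 1 else 0) := by
      intro i k m
      rw [hsplit]
      by_cases him : i = m
      · subst him
        have h3 : ∀ j ∈ Finset.univ.erase j1, (e j i) (x i j) = 1 := by
          intro j _
          rw [he]
          simp
        rw [Finset.prod_eq_one h3, mul_one, he]
        simp
      · have h3 : ∏ j ∈ Finset.univ.erase j1, (e j i) (x m j) = 0 := by
          refine Finset.prod_eq_zero (Finset.mem_erase.2 ⟨hjj, Finset.mem_univ j0⟩) ?_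
          rw [he]
          simp [him]
        rw [h3, mul_zero]
        simp [him]
    have hA : ∀ i k, φ i k (∑ m : Fin r, a m • ⨂ₜ[F] j, x m j)
        = if i = k then a i else 0 := by
      intro i k
      rw [map_sum]
      have h4 : ∀ m : Fin r, φ i k (a m • ⨂ₜ[F] j, x m j)
          = a m * ((if i = m then 1 else 0) * (if k = m then 1 else 0)) := by
        intro m
        rw [_root_.map_smul, hφt, key, smul_eq_mul]
      rw [Finset.sum_congr rfl fun m _ => h4 m]
      rw [Finset.sum_eq_single i]
      · by_cases hik : i = k
        · subst hik; simp
        · simp [hik, Ne.symm hik]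
      · intro m _ hmi
        simp [Ne.symm hmi]
      · intro h
        exact absurd (Finset.mem_univ i) h
    -- matrices
    set U : Matrix (Fin s) (Fin r) F :=
      fun t i => ∏ j ∈ Finset.univ.erase j1, (e j i) (y t j) with hU
    set W : Matrix (Fin s) (Fin r) F := fun t k => (e j1 k) (y t j1) with hW
    have hM : Matrix.diagonal a = Uᵀ * W := by
      ext i k
      have h1 := hA i k
      rw [hy, map_sum] at h1
      rw [Matrix.diagonal_apply, Matrix.mul_apply, ← h1]
      refine Finset.sum_congr rfl fun t _ => ?_
      rw [hφt, hsplit]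
      simp [hU, hW, Matrix.transpose_apply, mul_comm]
      exact Or.inl rfl
    have hr : (Matrix.diagonal a).rank = r := by
      rw [Matrix.rank_diagonal]
      rw [Fintype.card_congr (Equiv.subtypeUnivEquiv ha), Fintype.card_fin]
    have h5 : (Uᵀ * W).rank ≤ W.rank := Matrix.rank_mul_le_right _ _
    have h6 : W.rank ≤ s := le_trans (Matrix.rank_le_card_height W) (by simp)
    rw [hM] at hr
    omega
end

section
/- Let F be a field, r ≥ 0, x_1, …, x_r ∈ F^I linearly independent, and a_1, …, a_r ∈ F \ {0}. Then for every integer n ≥ 2, the symmetric tensor A = ∑_{i=1}^r a_i x_i^{⊗n} satisfies rank(A) = symmetric-rank(A) = r. -/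
open scoped TensorProduct
open PiTensorProduct

private lemma stmt10_dual (F : Type*) [Field F] (V : Type*) [AddCommGroup V] [Module F V]
    {r : ℕ} (x : Fin r → V) (hli : LinearIndependent F x) :
    ∃ g : Fin r → (V →ₗ[F] F), ∀ i j, g i (x j) = if i = j then 1 else 0 := by
  classical
  have hs := (linearIndepOn_id_range_iff hli.injective).mpr hli
  let b := Module.Basis.extend hs
  have hmem : ∀ i, x i ∈ hs.extend (Set.subset_univ _) := fun i =>
    hs.subset_extend _ ⟨i, rfl⟩
  refine ⟨fun i => b.coord ⟨x i, hmem i⟩, fun i j => ?_⟩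
  have hbj : b ⟨x j, hmem j⟩ = x j := Module.Basis.extend_apply_self hs ⟨x j, hmem j⟩
  have h2 : b.coord ⟨x i, hmem i⟩ (b ⟨x j, hmem j⟩) = if i = j then 1 else 0 := by
    rw [Module.Basis.coord_apply, Module.Basis.repr_self, Finsupp.single_apply]
    by_cases hij : i = j
    · simp [hij]
    · rw [if_neg, if_neg hij]
      intro hcon
      exact hij (hli.injective (by simpa using congrArg Subtype.val hcon)).symm
  rwa [hbj] at h2

private lemma stmt10_sep (F : Type*) [Field F] (V : Type*) [AddCommGroup V] [Module F V]
    (W : Submodule F V) (v : V) (hv : v ∉ W) :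
    ∃ h : V →ₗ[F] F, h v = 1 ∧ ∀ w ∈ W, h w = 0 := by
  classical
  have hv0 : (Submodule.Quotient.mk v : V ⧸ W) ≠ 0 := by
    simpa [Submodule.Quotient.mk_eq_zero] using hv
  have hs := LinearIndepOn.singleton (R := F) (v := id) hv0
  let b := Module.Basis.extend hs
  have hmem : (Submodule.Quotient.mk v : V ⧸ W) ∈ hs.extend (Set.subset_univ _) :=
    hs.subset_extend _ rfl
  refine ⟨(b.coord ⟨_, hmem⟩) ∘ₗ W.mkQ, ?_, fun w hw => ?_⟩
  · have hb : b ⟨_, hmem⟩ = (Submodule.Quotient.mk v : V ⧸ W) := Module.Basis.extend_apply_self hs _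
    have h2 : b.coord ⟨_, hmem⟩ (b ⟨_, hmem⟩) = 1 := by
      rw [Module.Basis.coord_apply, Module.Basis.repr_self]; simp
    simp only [LinearMap.comp_apply, Submodule.mkQ_apply]
    rwa [hb] at h2
  · simp only [LinearMap.comp_apply, Submodule.mkQ_apply]
    rw [show (Submodule.Quotient.mk w : V ⧸ W) = 0 by
      simpa [Submodule.Quotient.mk_eq_zero], map_zero]

private lemma stmt10_lb (F : Type*) [Field F] (I : Type*) (r : ℕ) (x : Fin r → (I → F))
    (hli : LinearIndependent F x) (a : Fin r → F) (ha : ∀ i, a i ≠ 0)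
    (n : ℕ) (hn : 2 ≤ n) (s : ℕ) (y : Fin s → Fin n → (I → F))
    (h : (∑ i : Fin r, a i • ⨂ₜ[F] _j : Fin n, x i) = ∑ t : Fin s, ⨂ₜ[F] j, y t j) :
    r ≤ s := by
  classical
  haveI : NeZero n := ⟨by omega⟩
  obtain ⟨g, hg⟩ := stmt10_dual F (I → F) x hli
  set W : Submodule F (I → F) := Submodule.span F (Set.range fun t => y t 0) with hW
  -- every x i lies in W
  have hxW : ∀ i, x i ∈ W := by
    intro i
    by_contra hxi
    obtain ⟨hfun, hf1, hf0⟩ := stmt10_sep F (I → F) W (x i) hxi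
    set ψ : Fin n → ((I → F) →ₗ[F] F) := fun j => if j = 0 then hfun else g i with hψ
    have happ := congrArg
      (PiTensorProduct.lift ((MultilinearMap.mkPiAlgebra F (Fin n) F).compLinearMap ψ)) h
    simp only [map_sum, map_smul, PiTensorProduct.lift.tprod,
      MultilinearMap.compLinearMap_apply, MultilinearMap.mkPiAlgebra_apply,
      smul_eq_mul] at happ
    have hL : ∀ k : Fin r, (a k * ∏ j : Fin n, ψ j (x k)) = if k = i then a i else 0 := by
      intro k
      by_cases hk : k = i
      · subst hk
        have : (∏ j : Fin n, ψ j (x k)) = 1 := by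
          refine Finset.prod_eq_one fun j _ => ?_
          by_cases hj : j = 0
          · simp [hψ, hj, hf1]
          · simp [hψ, hj, hg]
        simp [this]
      · have h1 : (⟨1, by omega⟩ : Fin n) ≠ 0 := by
          intro hcon
          simpa using congrArg Fin.val hcon
        have : (∏ j : Fin n, ψ j (x k)) = 0 := by
          refine Finset.prod_eq_zero (Finset.mem_univ (⟨1, by omega⟩ : Fin n)) ?_
          rw [hψ]
          simp only [if_neg h1]
          rw [hg]
          simp [Ne.symm hk]
        simp [this, hk]
    have hR : ∀ t : Fin s, (∏ j : Fin n, ψ j (y t j)) = 0 := by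
      intro t
      refine Finset.prod_eq_zero (Finset.mem_univ (0 : Fin n)) ?_
      simp only [hψ, if_pos rfl]
      exact hf0 _ (Submodule.subset_span ⟨t, rfl⟩)
    rw [Finset.sum_congr rfl (fun k _ => hL k), Finset.sum_congr rfl (fun t _ => hR t)] at happ
    simp at happ
    exact ha i happ
  haveI : Module.Finite F W := by
    rw [hW]
    exact FiniteDimensional.span_of_finite F (Set.finite_range _)
  have hle : Submodule.span F (Set.range x) ≤ W := by
    rw [Submodule.span_le]
    rintro _ ⟨i, rfl⟩
    exact hxW i
  have h1 : Module.finrank F (Submodule.span F (Set.range x)) = r := by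
    rw [finrank_span_eq_card hli, Fintype.card_fin]
  have h2 : Module.finrank F W ≤ s := by
    have := finrank_range_le_card (R := F) (fun t : Fin s => y t 0)
    simpa [Set.finrank, Fintype.card_fin] using this
  calc r = Module.finrank F (Submodule.span F (Set.range x)) := h1.symm
    _ ≤ Module.finrank F W := Submodule.finrank_mono hle
    _ ≤ s := h2

theorem stmt_10 (F : Type*) [Field F] (I : Type*) (r : ℕ) (x : Fin r → (I → F))
    (hli : LinearIndependent F x) (a : Fin r → F) (ha : ∀ i, a i ≠ 0)
    (n : ℕ) (hn : 2 ≤ n) :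
    IsLeast {s : ℕ | ∃ y : Fin s → Fin n → (I → F),
        (∑ i : Fin r, a i • ⨂ₜ[F] _j : Fin n, x i) = ∑ t : Fin s, ⨂ₜ[F] j, y t j} r ∧
    IsLeast {s : ℕ | ∃ (lam : Fin s → F) (f : Fin s → (I → F)),
        (∑ i : Fin r, a i • ⨂ₜ[F] _j : Fin n, x i) =
          ∑ t : Fin s, lam t • ⨂ₜ[F] _j : Fin n, f t} r := by
  classical
  haveI : NeZero n := ⟨by omega⟩
  have key : ∀ (c : F) (v : I → F),
      (⨂ₜ[F] j : Fin n, Function.update (fun _ : Fin n => v) 0 (c • v) j)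
        = c • ⨂ₜ[F] _j : Fin n, v := by
    intro c v
    have h := (tprod F (s := fun _ : Fin n => (I → F))).map_update_smul
      (fun _ : Fin n => v) 0 c v
    rw [Function.update_eq_self] at h
    exact h
  constructor
  · constructor
    · exact ⟨fun i => Function.update (fun _ : Fin n => x i) 0 (a i • x i),
        by simp only [key]⟩
    · rintro s ⟨y, hy⟩
      exact stmt10_lb F I r x hli a ha n hn s y hy
  · constructor
    · exact ⟨a, x, rfl⟩
    · rintro s ⟨lam, f, hy⟩
      refine stmt10_lb F I r x hli a ha n hn s
        (fun t => Function.update (fun _ : Fin n => f t) 0 (lam t • f t)) ?_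
      rw [hy]
      exact Finset.sum_congr rfl fun t _ => (key (lam t) (f t)).symm
end

section
/- Let F be a field and H an F-weighted graph with twin equivalence classes I_1, …, I_s. Define the twin-contraction graph H̃ with vertex set {I_1, …, I_s}, vertex weight of I_r equal to ∑_{t∈I_r} α_H(t), and edge weight from I_r to I_q equal to β_H(u,v) for any u ∈ I_r, v ∈ I_q, and then delete vertices of weight 0. Then hom(G, H) = hom(G, H̃) for every graph G. -/
/-- A `k`-labeled (multi)graph: `k` labeled vertices, `n` unlabeled vertices, and a
multiset of (oriented) edges; no loops are required for the statements below. -/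
structure LGraph (k : ℕ) where
  n : ℕ
  edges : Multiset ((Fin k ⊕ Fin n) × (Fin k ⊕ Fin n))

/-- The gluing product of two `k`-labeled graphs: disjoint union identifying
equally-labeled vertices. -/
def LGraph.glue {k : ℕ} (G₁ G₂ : LGraph k) : LGraph k where
  n := G₁.n + G₂.n
  edges :=
    G₁.edges.map (Prod.map (Sum.map id (Fin.castAdd G₂.n)) (Sum.map id (Fin.castAdd G₂.n))) +
    G₂.edges.map (Prod.map (Sum.map id (Fin.natAdd G₁.n)) (Sum.map id (Fin.natAdd G₁.n)))

/-- The `k`-labeled graph `U_k` on `k` labeled vertices with no edges. -/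
def LGraph.U (k : ℕ) : LGraph k := ⟨0, 0⟩

/-- An `F`-weighted graph ((di)graph): `q` vertices, nonzero vertex weights `α`,
arbitrary edge weights `β` (missing edges have weight `0`). -/
structure WGraph (F : Type*) [Field F] where
  q : ℕ
  α : Fin q → F
  β : Fin q → Fin q → F
  α_ne : ∀ i, α i ≠ 0

/-- The partial homomorphism sum `hom_ψ(G, H)`: the sum over all maps extending
`ψ` on the labeled vertices, with vertex-weight factors only for unlabeled vertices. -/
def WGraph.homPsi {F : Type*} [Field F] (H : WGraph F) {k : ℕ} (G : LGraph k)
    (ψ : Fin k → Fin H.q) : F :=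
  ∑ φ : Fin G.n → Fin H.q,
    (∏ v : Fin G.n, H.α (φ v)) *
      (G.edges.map fun e => H.β (Sum.elim ψ φ e.1) (Sum.elim ψ φ e.2)).prod

/-- The full weighted homomorphism sum `hom(G, H)` of a `k`-labeled graph
(ignoring labels). -/
def WGraph.homFull {F : Type*} [Field F] (H : WGraph F) {k : ℕ} (G : LGraph k) : F :=
  ∑ φ : (Fin k ⊕ Fin G.n) → Fin H.q,
    (∏ v : Fin k ⊕ Fin G.n, H.α (φ v)) *
      (G.edges.map fun e => H.β (φ e.1) (φ e.2)).prod

/-- Twin vertices: identical `β`-rows and `β`-columns. -/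
def WGraph.Twin {F : Type*} [Field F] (H : WGraph F) (i j : Fin H.q) : Prop :=
  ∀ ℓ, H.β i ℓ = H.β j ℓ ∧ H.β ℓ i = H.β ℓ j


/-- The twin relation as a setoid (it is an equivalence relation). -/
def WGraph.twinSetoid {F : Type*} [Field F] (H : WGraph F) : Setoid (Fin H.q) where
  r := H.Twin
  iseqv := ⟨fun _ _ => ⟨rfl, rfl⟩, fun h ℓ => ⟨(h ℓ).1.symm, (h ℓ).2.symm⟩,
    fun h h' ℓ => ⟨(h ℓ).1.trans (h' ℓ).1, (h ℓ).2.trans (h' ℓ).2⟩⟩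

open scoped Classical in
/-- If `H'` is the twin contraction of `H` (described by the partial projection
`π` sending each vertex to its twin class, `none` for the deleted zero-weight
classes), then `hom(G, H) = hom(G, H')` for every graph `G`. -/
theorem stmt_13 (F : Type*) [Field F] (H H' : WGraph F)
    (π : Fin H.q → Option (Fin H'.q))
    (hTwin : ∀ i j, H.Twin i j → π i = π j)
    (hInj : ∀ i j v w, π i = some v → π j = some w → (v = w ↔ H.Twin i j))
    (hSurj : ∀ v : Fin H'.q, ∃ i, π i = some v)
    (hα : ∀ v : Fin H'.q,
      H'.α v = ∑ i ∈ Finset.univ.filter (fun i => π i = some v), H.α i)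
    (hβ : ∀ i j v w, π i = some v → π j = some w → H'.β v w = H.β i j)
    (hdel : ∀ i, π i = none →
      ∑ j ∈ Finset.univ.filter (fun j => H.Twin i j), H.α j = 0) :
    ∀ G : LGraph 0, H.homFull G = H'.homFull G := by
  intro G
  classical
  let Q := Quotient H.twinSetoid
  let r : Fin H.q → Q := Quotient.mk _
  let A : Q → F := fun c => ∑ i ∈ Finset.univ.filter (fun i => r i = c), H.α i
  let B : Q → Q → F := Quotient.lift₂ H.β (fun a b a' b' ha hb => ((ha b).1).trans ((hb a').2))
  let p : Q → Option (Fin H'.q) := Quotient.lift π hTwin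
  have hB : ∀ i j, B (r i) (r j) = H.β i j := fun i j => rfl
  have hp : ∀ i, p (r i) = π i := fun i => rfl
  have pinj : ∀ c d v w, p c = some v → p d = some w → v = w → c = d := by
    intro c d
    induction c using Quotient.ind with | _ i =>
    induction d using Quotient.ind with | _ j =>
    intro v w hv hw hvw
    exact Quotient.sound ((hInj i j v w hv hw).mp hvw)
  have Bsome : ∀ c d v w, p c = some v → p d = some w → B c d = H'.β v w := by
    intro c d
    induction c using Quotient.ind with | _ i =>
    induction d using Quotient.ind with | _ j =>
    intro v w hv hw
    exact (hβ i j v w hv hw).symm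
  have Azero : ∀ c, p c = none → A c = 0 := by
    intro c
    induction c using Quotient.ind with | _ i =>
    intro hc
    have := hdel i hc
    rw [← this]
    apply Finset.sum_congr _ (fun _ _ => rfl)
    ext j
    simp only [Finset.mem_filter, Finset.mem_univ, true_and]
    constructor
    · intro h
      exact (H.twinSetoid.symm (Quotient.exact h) : H.Twin i j)
    · intro h
      exact Quotient.sound (H.twinSetoid.symm h)
  have Asome : ∀ c v, p c = some v → A c = H'.α v := by
    intro c
    induction c using Quotient.ind with | _ i =>
    intro v hc
    rw [hα v]
    apply Finset.sum_congr _ (fun _ _ => rfl)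
    ext j
    simp only [Finset.mem_filter, Finset.mem_univ, true_and]
    constructor
    · intro h
      rw [← hc, ← hp j]
      exact congrArg p h
    · intro h
      exact pinj (r j) (r i) v v (by rwa [hp]) hc rfl
  have secex : ∀ v : Fin H'.q, ∃ c, p c = some v := by
    intro v
    obtain ⟨i, hi⟩ := hSurj v
    exact ⟨r i, by rwa [hp]⟩
  let sec : Fin H'.q → Q := fun v => (secex v).choose
  have psec : ∀ v, p (sec v) = some v := fun v => (secex v).choose_spec
  -- Step 1: rewrite hom(G, H) as a sum over twin-class valued maps.
  have key : H.homFull G =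
      ∑ ψ : (Fin 0 ⊕ Fin G.n) → Q,
        (∏ v, A (ψ v)) * (G.edges.map fun e => B (ψ e.1) (ψ e.2)).prod := by
    rw [WGraph.homFull,
      ← Finset.sum_fiberwise Finset.univ (fun φ : (Fin 0 ⊕ Fin G.n) → Fin H.q => r ∘ φ)]
    refine Finset.sum_congr rfl fun ψ _ => ?_
    have hE : ∀ φ : (Fin 0 ⊕ Fin G.n) → Fin H.q, r ∘ φ = ψ →
        (G.edges.map fun e => H.β (φ e.1) (φ e.2)).prod
          = (G.edges.map fun e => B (ψ e.1) (ψ e.2)).prod := by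
      intro φ hφ
      congr 1
      refine Multiset.map_congr rfl fun e _ => ?_
      rw [← hφ]
      exact (hB _ _).symm
    rw [Finset.sum_congr rfl (fun φ hφ => by
        rw [hE φ (Finset.mem_filter.mp hφ).2]), ← Finset.sum_mul]
    congr 1
    have hfib : (Finset.univ.filter (fun φ : (Fin 0 ⊕ Fin G.n) → Fin H.q => r ∘ φ = ψ))
        = Fintype.piFinset (fun v => Finset.univ.filter (fun i => r i = ψ v)) := by
      ext φ
      simp [Fintype.mem_piFinset, funext_iff, Function.comp]
    rw [hfib]
    exact (Finset.prod_univ_sum _ _).symm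
  rw [key, WGraph.homFull]
  refine (Finset.sum_of_injOn (fun φ' => sec ∘ φ') ?_ (fun _ _ => Finset.mem_univ _) ?_ ?_).symm
  · intro φ₁ _ φ₂ _ h
    funext v
    refine Option.some_injective _ ?_
    rw [← psec (φ₁ v), ← psec (φ₂ v)]
    exact congrArg p (congrFun h v)
  · intro ψ _ hψ
    by_cases hall : ∀ v, ∃ w, p (ψ v) = some w
    · exfalso
      apply hψ
      refine ⟨fun v => (hall v).choose, by simp, ?_⟩
      funext v
      show sec (hall v).choose = ψ v
      exact pinj (sec (hall v).choose) (ψ v) _ _ (psec _) (hall v).choose_spec rfl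
    · push_neg at hall
      obtain ⟨v, hv⟩ := hall
      have : p (ψ v) = none := by
        cases h : p (ψ v) with
        | none => rfl
        | some w => exact absurd h (hv w)
      rw [Finset.prod_eq_zero (Finset.mem_univ v) (Azero _ this), zero_mul]
  · intro φ' _
    congr 1
    · exact Finset.prod_congr rfl fun v _ => (Asome _ _ (psec (φ' v))).symm
    · congr 1
      refine Multiset.map_congr rfl fun e _ => ?_
      exact (Bsome _ _ _ _ (psec _) (psec _)).symm
end

section
/- Let p be a prime, F a field of characteristic p, n ≥ 2, and ℓ_1 > … > ℓ_n > 0. Let H be the (unweighted, all weights 1) graph on vertex set U ∪ V_1 ∪ … ∪ V_n where U = {u_1,…,u_n}, |V_i| = ℓ_i p, whose edges form a complete graph on U and a complete graph on {u_i} ∪ V_i for each i. Then for any k ≥ 0 and any φ : [k] → U, hom_φ(G, H) = hom_φ(G, K_U) in F for every k-labeled graph G, where K_U is the complete graph on U. -/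
/-- The partial homomorphism sum `hom_ψ(G, H)` into a graph on vertex set `V`
with edge weights `β` and all vertex weights equal to `1`. -/
def homPsiV {F : Type*} [Field F] {V : Type*} [Fintype V] (β : V → V → F)
    {k : ℕ} (G : LGraph k) (ψ : Fin k → V) : F :=
  ∑ φ : Fin G.n → V,
    (G.edges.map fun e => β (Sum.elim ψ φ e.1) (Sum.elim ψ φ e.2)).prod

/-! ### Auxiliary lemmas -/

open scoped Fin.NatCast Fin.CommRing

private lemma perm_fix_iterate {X : Type*} (σ : Equiv.Perm X) {a : ℕ} {z : X}
    (hz : (σ ^ a) z = z) : ∀ k, (σ ^ (a * k)) z = z := by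
  intro k
  induction k with
  | zero => simp
  | succ k ih =>
    have h : a * (k + 1) = a * k + a := by ring
    rw [h, pow_add, Equiv.Perm.mul_apply, hz, ih]

private lemma perm_fix_of_pow_fix {X : Type*} (σ : Equiv.Perm X) {p d : ℕ} (hp : p.Prime)
    (hd : 0 < d) (hdp : d < p) {y : X} (h1 : (σ ^ d) y = y) (h2 : (σ ^ p) y = y) :
    σ y = y := by
  have hco : Nat.Coprime d p :=
    Nat.Coprime.symm ((Nat.Prime.coprime_iff_not_dvd hp).mpr
      (fun hdvd => absurd (Nat.le_of_dvd hd hdvd) (not_le.mpr hdp)))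
  obtain ⟨m, -, hm⟩ := Nat.exists_mul_mod_eq_one_of_coprime hco hp.one_lt
  have hdm : d * m = p * (d * m / p) + 1 := by
    have h := Nat.div_add_mod (d * m) p
    omega
  have hq : (σ ^ (p * (d * m / p))) y = y := perm_fix_iterate σ h2 _
  calc σ y = σ ((σ ^ (p * (d * m / p))) y) := by rw [hq]
    _ = (σ ^ (p * (d * m / p) + 1)) y := by
        rw [pow_succ', Equiv.Perm.mul_apply]
    _ = (σ ^ (d * m)) y := by rw [← hdm]
    _ = y := perm_fix_iterate σ h1 m

private lemma sum_moved_eq_zero {F : Type*} [Field F] {p : ℕ} (hp : p.Prime) [CharP F p]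
    {X : Type*} [DecidableEq X] (σ : Equiv.Perm X)
    (hσp : ∀ x, (σ ^ p) x = x) (f : X → F) (hf : ∀ x, f (σ x) = f x) :
    ∀ s : Finset X, (∀ x ∈ s, σ x ≠ x) → (∀ x ∈ s, σ x ∈ s) → ∑ x ∈ s, f x = 0 := by
  intro s
  induction s using Finset.strongInduction with
  | _ s ih =>
    intro hmov hcl
    rcases s.eq_empty_or_nonempty with rfl | ⟨x, hx⟩
    · simp
    · have hpowmem : ∀ t : ℕ, (σ ^ t) x ∈ s := by
        intro t
        induction t with
        | zero => simpa using hx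
        | succ t iht =>
          rw [pow_succ', Equiv.Perm.mul_apply]
          exact hcl _ iht
      have key : ∀ a b : ℕ, a < b → b < p → (σ ^ a) x = (σ ^ b) x → False := by
        intro a b hab hbp heq
        have h1 : (σ ^ (b - a)) ((σ ^ a) x) = (σ ^ a) x := by
          have hba : b - a + a = b := Nat.sub_add_cancel hab.le
          calc (σ ^ (b - a)) ((σ ^ a) x) = (σ ^ (b - a + a)) x := by
                rw [pow_add, Equiv.Perm.mul_apply]
            _ = (σ ^ a) x := by rw [hba, ← heq]
        exact hmov _ (hpowmem a)
          (perm_fix_of_pow_fix σ hp (Nat.sub_pos_of_lt hab)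
            (lt_of_le_of_lt (Nat.sub_le b a) hbp) h1 (hσp _))
      have hinj : ∀ a ∈ Finset.range p, ∀ b ∈ Finset.range p,
          (σ ^ a) x = (σ ^ b) x → a = b := by
        intro a ha b hb heq
        rcases lt_trichotomy a b with h | h | h
        · exact absurd heq (fun heq => key a b h (Finset.mem_range.mp hb) heq)
        · exact h
        · exact absurd heq.symm (fun heq => key b a h (Finset.mem_range.mp ha) heq)
      set O : Finset X := (Finset.range p).image (fun t => (σ ^ t) x) with hO
      have hOs : O ⊆ s := by
        intro y hy
        obtain ⟨t, _, rfl⟩ := Finset.mem_image.mp hy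
        exact hpowmem t
      have hxO : x ∈ O := Finset.mem_image.mpr ⟨0, Finset.mem_range.mpr hp.pos, by simp⟩
      have hOsum : ∑ y ∈ O, f y = 0 := by
        have hconst : ∀ t : ℕ, f ((σ ^ t) x) = f x := by
          intro t
          induction t with
          | zero => simp
          | succ t iht =>
            rw [pow_succ', Equiv.Perm.mul_apply, hf, iht]
        rw [hO, Finset.sum_image hinj]
        calc ∑ t ∈ Finset.range p, f ((σ ^ t) x) = ∑ _t ∈ Finset.range p, f x := by
              exact Finset.sum_congr rfl fun t _ => hconst t
          _ = (p : F) * f x := by rw [Finset.sum_const, Finset.card_range, nsmul_eq_mul]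
          _ = 0 := by rw [CharP.cast_eq_zero F p, zero_mul]
      -- σ maps O into O
      have hOclosed : ∀ y ∈ O, σ y ∈ O := by
        intro y hy
        obtain ⟨t, ht, rfl⟩ := Finset.mem_image.mp hy
        have ht' : t < p := Finset.mem_range.mp ht
        rcases eq_or_lt_of_le (Nat.succ_le_of_lt ht') with hsucc | hsucc
        · refine Finset.mem_image.mpr ⟨0, Finset.mem_range.mpr hp.pos, ?_⟩
          have : (σ ^ (t + 1)) x = x := by
            rw [show t + 1 = p from hsucc]; exact hσp x
          rw [pow_succ', Equiv.Perm.mul_apply] at this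
          simpa using this.symm
        · refine Finset.mem_image.mpr ⟨t + 1, Finset.mem_range.mpr hsucc, ?_⟩
          rw [pow_succ', Equiv.Perm.mul_apply]
      have hrest : ∑ y ∈ s \ O, f y = 0 := by
        refine ih (s \ O) (Finset.sdiff_ssubset hOs ⟨x, hxO⟩) ?_ ?_
        · intro y hy; exact hmov y (Finset.mem_sdiff.mp hy).1
        · intro y hy
          obtain ⟨hys, hyO⟩ := Finset.mem_sdiff.mp hy
          refine Finset.mem_sdiff.mpr ⟨hcl y hys, fun hσyO => hyO ?_⟩
          -- σ y ∈ O implies y ∈ O, since σ restricted to O is a bijection of O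
          have hbij : Finset.image σ O = O := by
            apply Finset.eq_of_subset_of_card_le
            · intro z hz
              obtain ⟨w, hw, rfl⟩ := Finset.mem_image.mp hz
              exact hOclosed w hw
            · rw [Finset.card_image_of_injective _ σ.injective]
          rw [← hbij] at hσyO
          obtain ⟨w, hw, hwy⟩ := Finset.mem_image.mp hσyO
          rwa [← σ.injective hwy]
      calc ∑ y ∈ s, f y = ∑ y ∈ s \ O, f y + ∑ y ∈ O, f y := (Finset.sum_sdiff hOs).symm
        _ = 0 := by rw [hrest, hOsum, add_zero]

private lemma sum_eq_sum_fixed {F : Type*} [Field F] {p : ℕ} (hp : p.Prime) [CharP F p]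
    {X : Type*} [Fintype X] [DecidableEq X] (σ : Equiv.Perm X)
    (hσp : ∀ x, (σ ^ p) x = x) (f : X → F) (hf : ∀ x, f (σ x) = f x) :
    ∑ x, f x = ∑ x ∈ Finset.univ.filter (fun x => σ x = x), f x := by
  classical
  rw [← Finset.sum_filter_add_sum_filter_not Finset.univ (fun x => σ x = x) f]
  rw [sum_moved_eq_zero hp σ hσp f hf _ (fun x hx => (Finset.mem_filter.mp hx).2)
    (fun x hx => Finset.mem_filter.mpr ⟨Finset.mem_univ _,
      fun h => (Finset.mem_filter.mp hx).2 (σ.injective h)⟩), add_zero]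

/-- The rotation automorphism of `H`: fixes `U` pointwise and translates each `V_i` by `ℓ i`. -/
private def rotH (p : ℕ) {n : ℕ} (ℓ : Fin n → ℕ) (h : ∀ i, 0 < ℓ i * p) :
    Equiv.Perm (Fin n ⊕ (Σ i : Fin n, Fin (ℓ i * p))) :=
  Equiv.sumCongr (Equiv.refl _) (Equiv.sigmaCongrRight fun i =>
    haveI : NeZero (ℓ i * p) := ⟨(h i).ne'⟩
    Equiv.addRight ((ℓ i : Fin (ℓ i * p))))

private lemma addRight_pow_apply {m : ℕ} [NeZero m] (c : Fin m) :
    ∀ (k : ℕ) (x : Fin m), ((Equiv.addRight c) ^ k) x = x + k • c := by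
  intro k
  induction k with
  | zero => intro x; simp
  | succ k ih =>
    intro x
    rw [pow_succ', Equiv.Perm.mul_apply, ih, succ_nsmul]
    show x + k • c + c = x + (k • c + c)
    rw [add_assoc]

open scoped Classical in
theorem stmt_17 (F : Type*) [Field F] (p : ℕ) (hp : p.Prime) [CharP F p]
    (n : ℕ) (hn : 2 ≤ n) (ℓ : Fin n → ℕ)
    (hpos : ∀ i, 0 < ℓ i) (hdec : ∀ i j : Fin n, i < j → ℓ j < ℓ i)
    -- `H` has vertex set `U ⊕ (V_1 ∪ ⋯ ∪ V_n)`, `U = {u_1, …, u_n}`, `|V_i| = ℓ_i p`;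
    -- its 0-1 edge weights make `U` a clique and `{u_i} ∪ V_i` a clique for each `i`.
    (βH : (Fin n ⊕ (Σ i : Fin n, Fin (ℓ i * p))) →
          (Fin n ⊕ (Σ i : Fin n, Fin (ℓ i * p))) → F)
    (hβH : ∀ u v, βH u v =
      (match u, v with
        | Sum.inl a, Sum.inl b => if a ≠ b then (1 : F) else 0
        | Sum.inl a, Sum.inr ⟨b, _⟩ => if a = b then (1 : F) else 0
        | Sum.inr ⟨a, _⟩, Sum.inl b => if a = b then (1 : F) else 0
        | Sum.inr ⟨a, x⟩, Sum.inr ⟨b, y⟩ =>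
            if h : a = b then (if h ▸ x ≠ y then (1 : F) else 0) else 0))
    -- `K_U` is the complete graph on `U`, with 0-1 edge weights:
    (βK : Fin n → Fin n → F) (hβK : ∀ a b, βK a b = if a ≠ b then (1 : F) else 0)
    (k : ℕ) (φ : Fin k → Fin n) (G : LGraph k) :
    homPsiV βH G (Sum.inl ∘ φ) = homPsiV βK G φ := by
  classical
  have hmpos : ∀ i, 0 < ℓ i * p := fun i => Nat.mul_pos (hpos i) hp.pos
  set e : Equiv.Perm (Fin n ⊕ (Σ i : Fin n, Fin (ℓ i * p))) := rotH p ℓ hmpos with hedef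
  -- basic computation rules for `e`
  have he_inl : ∀ a : Fin n, e (Sum.inl a) = Sum.inl a := fun a => rfl
  have he_inr : ∀ (i : Fin n) (x : Fin (ℓ i * p)),
      e (Sum.inr ⟨i, x⟩) =
        Sum.inr ⟨i, haveI : NeZero (ℓ i * p) := ⟨(hmpos i).ne'⟩
          x + ((ℓ i : Fin (ℓ i * p)))⟩ := fun i x => rfl
  -- the weight function
  set ψ : Fin k → (Fin n ⊕ (Σ i : Fin n, Fin (ℓ i * p))) := Sum.inl ∘ φ with hψdef
  set f : (Fin G.n → (Fin n ⊕ (Σ i : Fin n, Fin (ℓ i * p)))) → F := fun g =>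
    (G.edges.map fun e' => βH (Sum.elim ψ g e'.1) (Sum.elim ψ g e'.2)).prod with hfdef
  -- the permutation on maps
  set σ : Equiv.Perm (Fin G.n → (Fin n ⊕ (Σ i : Fin n, Fin (ℓ i * p)))) :=
    ⟨fun g => e ∘ g, fun g => e.symm ∘ g,
      fun g => by funext j; simp, fun g => by funext j; simp⟩ with hσdef
  have hσ_apply : ∀ (g : Fin G.n → (Fin n ⊕ (Σ i : Fin n, Fin (ℓ i * p)))) (j : Fin G.n),
      σ g j = e (g j) := fun g j => rfl
  have hσ_pow : ∀ (m : ℕ) (g : Fin G.n → (Fin n ⊕ (Σ i : Fin n, Fin (ℓ i * p)))) (j : Fin G.n),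
      (σ ^ m) g j = (e ^ m) (g j) := by
    intro m
    induction m with
    | zero => intro g j; simp
    | succ m ih =>
      intro g j
      rw [pow_succ', pow_succ', Equiv.Perm.mul_apply, Equiv.Perm.mul_apply, hσ_apply, ih]
  -- e ^ p = id
  have he_pow_inr : ∀ (m : ℕ) (i : Fin n) (x : Fin (ℓ i * p)),
      (e ^ m) (Sum.inr ⟨i, x⟩) =
        Sum.inr ⟨i, haveI : NeZero (ℓ i * p) := ⟨(hmpos i).ne'⟩
          x + m • ((ℓ i : Fin (ℓ i * p)))⟩ := by
    intro m
    induction m with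
    | zero =>
      intro i x
      haveI : NeZero (ℓ i * p) := ⟨(hmpos i).ne'⟩
      simp
    | succ m ih =>
      intro i x
      haveI : NeZero (ℓ i * p) := ⟨(hmpos i).ne'⟩
      rw [pow_succ', Equiv.Perm.mul_apply, ih, he_inr, succ_nsmul, add_assoc]
  have hsmul_zero : ∀ i : Fin n,
      haveI : NeZero (ℓ i * p) := ⟨(hmpos i).ne'⟩
      p • ((ℓ i : Fin (ℓ i * p))) = 0 := by
    intro i
    haveI : NeZero (ℓ i * p) := ⟨(hmpos i).ne'⟩
    have h1 : p • ((ℓ i : Fin (ℓ i * p))) = ((p * ℓ i : ℕ) : Fin (ℓ i * p)) := by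
      rw [nsmul_eq_mul, Nat.cast_mul]
    rw [h1, (CharP.cast_eq_zero_iff (Fin (ℓ i * p)) (ℓ i * p) (p * ℓ i)).mpr
      ⟨1, by ring⟩]
  have he_pow_inl : ∀ (m : ℕ) (a : Fin n), (e ^ m) (Sum.inl a) = Sum.inl a := by
    intro m
    induction m with
    | zero => intro a; simp
    | succ m ihm =>
      intro a
      rw [pow_succ', Equiv.Perm.mul_apply, ihm, he_inl]
  have he_p : ∀ v : (Fin n ⊕ (Σ i : Fin n, Fin (ℓ i * p))), (e ^ p) v = v := by
    intro v
    rcases v with a | ⟨i, x⟩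
    · exact he_pow_inl p a
    · rw [he_pow_inr p i x, hsmul_zero i]
      haveI : NeZero (ℓ i * p) := ⟨(hmpos i).ne'⟩
      simp
  have hσ_p : ∀ g : Fin G.n → (Fin n ⊕ (Σ i : Fin n, Fin (ℓ i * p))), (σ ^ p) g = g := by
    intro g; funext j; rw [hσ_pow, he_p]
  -- no fixed elements of e besides the inl-part
  have he_ne : ∀ (i : Fin n) (x : Fin (ℓ i * p)), e (Sum.inr ⟨i, x⟩) ≠ Sum.inr ⟨i, x⟩ := by
    intro i x h
    haveI : NeZero (ℓ i * p) := ⟨(hmpos i).ne'⟩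
    rw [he_inr] at h
    have h2 := Sum.inr_injective h
    have h3 : x + ((ℓ i : Fin (ℓ i * p))) = x := eq_of_heq (Sigma.mk.inj_iff.mp h2).2
    have hc : ((ℓ i : Fin (ℓ i * p))) = 0 := by
      have h4 : x + ((ℓ i : Fin (ℓ i * p))) = x + 0 := by rw [add_zero]; exact h3
      exact add_left_cancel h4
    have h5 : (ℓ i) % (ℓ i * p) = 0 := by
      have h6 := congrArg Fin.val hc
      simpa [Fin.val_natCast] using h6
    rw [Nat.mod_eq_of_lt (lt_mul_iff_one_lt_right (hpos i) |>.mpr hp.one_lt)] at h5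
    exact (hpos i).ne' h5
  -- invariance of the weights under e
  have hβinv : ∀ u v : (Fin n ⊕ (Σ i : Fin n, Fin (ℓ i * p))), βH (e u) (e v) = βH u v := by
    intro u v
    rcases u with a | ⟨a, x⟩ <;> rcases v with b | ⟨b, y⟩
    · rw [he_inl, he_inl]
    · rw [he_inl, he_inr, hβH, hβH]
    · rw [he_inl, he_inr, hβH, hβH]
    · rw [he_inr, he_inr, hβH, hβH]
      haveI : NeZero (ℓ a * p) := ⟨(hmpos a).ne'⟩
      haveI : NeZero (ℓ b * p) := ⟨(hmpos b).ne'⟩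
      by_cases hab : a = b
      · subst hab
        show (if h : a = a then
            (if h ▸ (x + ((ℓ a : Fin (ℓ a * p)))) ≠ y + ((ℓ a : Fin (ℓ a * p))) then (1:F) else 0)
            else 0) =
          (if h : a = a then (if h ▸ x ≠ y then (1:F) else 0) else 0)
        rw [dif_pos rfl, dif_pos rfl]
        show (if (x + ((ℓ a : Fin (ℓ a * p)))) ≠ y + ((ℓ a : Fin (ℓ a * p))) then (1:F) else 0) =
          (if x ≠ y then (1:F) else 0)
        have hxy : ((x + ((ℓ a : Fin (ℓ a * p)))) = y + ((ℓ a : Fin (ℓ a * p)))) ↔ (x = y) :=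
          add_left_injective _ |>.eq_iff
        by_cases hxy' : x = y
        · rw [if_neg (by simpa [hxy] using hxy'), if_neg (by simpa using hxy')]
        · rw [if_pos (by simpa [hxy] using hxy'), if_pos hxy']
      · show (if h : a = b then _ else (0:F)) = (if h : a = b then _ else 0)
        rw [dif_neg hab, dif_neg hab]
  -- invariance of f under σ
  have hfinv : ∀ g, f (σ g) = f g := by
    intro g
    rw [hfdef]
    refine congrArg Multiset.prod (Multiset.map_congr rfl ?_)
    intro e' _
    have helim : ∀ s : Fin k ⊕ Fin G.n, Sum.elim ψ (σ g) s = e (Sum.elim ψ g s) := by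
      intro s
      rcases s with j | j
      · show ψ j = e (ψ j)
        rw [hψdef]
        exact (he_inl (φ j)).symm
      · rfl
    rw [helim e'.1, helim e'.2, hβinv]
  -- apply the cancellation lemma
  have hmain : homPsiV βH G (Sum.inl ∘ φ) =
      ∑ g ∈ Finset.univ.filter (fun g => σ g = g), f g := by
    rw [homPsiV]
    exact sum_eq_sum_fixed hp σ hσ_p f hfinv
  rw [hmain, homPsiV]
  -- the fixed maps are exactly the maps into the inl-part
  have hfix_iff : ∀ g : Fin G.n → (Fin n ⊕ (Σ i : Fin n, Fin (ℓ i * p))),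
      σ g = g ↔ ∀ j, ∃ a, g j = Sum.inl a := by
    intro g
    constructor
    · intro h j
      have hj : e (g j) = g j := by
        conv_rhs => rw [← h]
        rfl
      rcases hgj : g j with a | ⟨i, x⟩
      · exact ⟨a, rfl⟩
      · rw [hgj] at hj
        exact absurd hj (he_ne i x)
    · intro h
      funext j
      obtain ⟨a, ha⟩ := h j
      show e (g j) = g j
      rw [ha, he_inl]
  -- bijection between fixed maps and maps into Fin n
  refine Finset.sum_nbij' (fun g => fun j => Sum.elim id Sigma.fst (g j))
    (fun h => Sum.inl ∘ h) ?_ ?_ ?_ ?_ ?_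
  · intro g _; exact Finset.mem_univ _
  · intro h _
    refine Finset.mem_filter.mpr ⟨Finset.mem_univ _, ?_⟩
    rw [hfix_iff]
    intro j; exact ⟨h j, rfl⟩
  · intro g hg
    funext j
    obtain ⟨a, ha⟩ := (hfix_iff g).mp (Finset.mem_filter.mp hg).2 j
    show Sum.inl (Sum.elim id Sigma.fst (g j)) = g j
    rw [ha]; rfl
  · intro h _; rfl
  · intro g hg
    rw [hfdef]
    refine congrArg Multiset.prod (Multiset.map_congr rfl ?_)
    intro e' _
    have hfix := (hfix_iff g).mp (Finset.mem_filter.mp hg).2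
    have helim : ∀ s : Fin k ⊕ Fin G.n,
        Sum.elim ψ g s = Sum.inl (Sum.elim φ (fun j => Sum.elim id Sigma.fst (g j)) s) := by
      intro s
      rcases s with j | j
      · rfl
      · obtain ⟨a, ha⟩ := hfix j
        show g j = Sum.inl (Sum.elim id Sigma.fst (g j))
        rw [ha]; rfl
    rw [helim e'.1, helim e'.2, hβH, hβK]
end

section
/- Let F be a field of characteristic p > 0. Then there exist twin-free F-weighted graphs H and H' (in fact unweighted simple graphs viewed with all weights 1) such that hom(G, H) = hom(G, H') in F for every graph G, but H and H' are not isomorphic. Hence the Lovász-type isomorphism theorem fails over fields of positive characteristic. -/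
/-- Twin-freeness: distinct vertices never have identical `β`-rows and columns. -/
def WGraph.TwinFree {F : Type*} [Field F] (H : WGraph F) : Prop :=
  ∀ i j : Fin H.q, (∀ ℓ, H.β i ℓ = H.β j ℓ ∧ H.β ℓ i = H.β ℓ j) → i = j

/-- Isomorphism of `F`-weighted graphs: a bijection of the vertex sets
preserving all vertex and edge weights. -/
def WGraph.Isomorphic {F : Type*} [Field F] (H H' : WGraph F) : Prop :=
  ∃ σ : Fin H.q → Fin H'.q, Function.Bijective σ ∧
    (∀ i, H'.α (σ i) = H.α i) ∧ ∀ i j, H'.β (σ i) (σ j) = H.β i j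

/-- Properness of a coloring with respect to an edge multiset. -/
def ProperCol {V C : Type*} (E : Multiset (V × V)) (φ : V → C) : Prop :=
  ∀ e ∈ E, φ e.1 ≠ φ e.2

theorem properCol_comp_iff {V C C' : Type*} (E : Multiset (V × V)) (f : C → C')
    (hf : Function.Injective f) (φ : V → C) :
    ProperCol E (f ∘ φ) ↔ ProperCol E φ := by
  unfold ProperCol
  constructor
  · intro h e he hne
    exact h e he (by simp [Function.comp, hne])
  · intro h e he hne
    exact h e he (hf hne)

/-- Transporting the count of proper colorings along a bijection of colors. -/
theorem card_proper_congr {V C C' : Type*} (E : Multiset (V × V)) (e : C ≃ C') :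
    Nat.card {φ : V → C // ProperCol E φ} = Nat.card {φ : V → C' // ProperCol E φ} := by
  refine Nat.card_congr ?_
  refine Equiv.subtypeEquiv (Equiv.arrowCongr (Equiv.refl V) e) ?_
  intro φ
  have : (Equiv.arrowCongr (Equiv.refl V) e) φ = e ∘ φ := rfl
  rw [this, properCol_comp_iff E e e.injective]

/-- Adding `p` fresh interchangeable colors does not change the number of proper
colorings mod `p`. -/
theorem card_proper_add_zmod {p : ℕ} (hp : p.Prime) {V C : Type*} [Finite V] [Finite C]
    (E : Multiset (V × V)) :
    Nat.card {φ : V → C ⊕ ZMod p // ProperCol E φ} ≡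
      Nat.card {φ : V → C // ProperCol E φ} [MOD p] := by
  haveI : Fact p.Prime := ⟨hp⟩
  haveI : NeZero p := ⟨hp.ne_zero⟩
  classical
  -- the shift map on colors
  have shift_inj : ∀ a : ZMod p, Function.Injective
      (Sum.map (id : C → C) (fun x : ZMod p => x + a)) := by
    intro a
    exact Sum.map_injective.mpr ⟨Function.injective_id, fun x y h => by
      simpa using congrArg (fun t => t - a) h⟩
  letI : SMul (Multiplicative (ZMod p)) {φ : V → C ⊕ ZMod p // ProperCol E φ} :=
    ⟨fun a φ => ⟨(Sum.map id (fun x => x + a.toAdd)) ∘ φ.1,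
      (properCol_comp_iff E _ (shift_inj a.toAdd) φ.1).mpr φ.2⟩⟩
  letI M : MulAction (Multiplicative (ZMod p)) {φ : V → C ⊕ ZMod p // ProperCol E φ} :=
    { one_smul := by
        intro φ
        apply Subtype.ext
        funext v
        show (Sum.map id (fun x => x + (1 : Multiplicative (ZMod p)).toAdd)) (φ.1 v) = φ.1 v
        cases φ.1 v <;> simp
      mul_smul := by
        intro a b φ
        apply Subtype.ext
        funext v
        show (Sum.map id (fun x => x + (a * b).toAdd)) (φ.1 v) =
          (Sum.map id (fun x => x + a.toAdd)) ((Sum.map id (fun x => x + b.toAdd)) (φ.1 v))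
        cases φ.1 v <;> simp [add_comm, add_left_comm, add_assoc] }
  have hPG : IsPGroup p (Multiplicative (ZMod p)) := by
    apply IsPGroup.of_card (n := 1)
    simp [Nat.card_eq_fintype_card]
  have key := hPG.card_modEq_card_fixedPoints {φ : V → C ⊕ ZMod p // ProperCol E φ}
  -- fixed points are exactly colorings avoiding the new colors
  haveI : Fact (1 < p) := ⟨hp.one_lt⟩
  have hcard : Nat.card {φ : V → C // ProperCol E φ} =
      Nat.card (MulAction.fixedPoints (Multiplicative (ZMod p))
      {φ : V → C ⊕ ZMod p // ProperCol E φ}) := by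
    refine Nat.card_eq_of_bijective
      (fun ψ => ⟨⟨(Sum.inl : C → C ⊕ ZMod p) ∘ ψ.1,
        (properCol_comp_iff E Sum.inl Sum.inl_injective ψ.1).mpr ψ.2⟩, ?_⟩) ⟨?_, ?_⟩
    · intro a
      apply Subtype.ext
      funext v
      rfl
    · intro ψ ψ' h
      apply Subtype.ext
      funext v
      have := congrFun (congrArg (fun t => (t.1.1 : V → C ⊕ ZMod p)) h) v
      exact Sum.inl_injective this
    · rintro ⟨⟨φ, hφ⟩, hfix⟩
      have hv : ∀ v, ∃ c, φ v = Sum.inl c := by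
        intro v
        cases hx : φ v with
        | inl c => exact ⟨c, rfl⟩
        | inr x =>
          exfalso
          have h2 : Sum.map (id : C → C) (fun y : ZMod p => y + 1) (φ v) = φ v :=
            congrFun (congrArg Subtype.val (hfix (Multiplicative.ofAdd (1 : ZMod p)))) v
          rw [hx] at h2
          have hx1 : x + 1 = x := Sum.inr_injective h2
          have : (1 : ZMod p) = 0 := by
            have := congrArg (fun t => t - x) hx1
            simpa [add_comm] using this
          exact one_ne_zero this
      refine ⟨⟨fun v => (hv v).choose, ?_⟩, ?_⟩
      · have hφeq : (Sum.inl : C → C ⊕ ZMod p) ∘ (fun v => (hv v).choose) = φ := by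
          funext v
          exact ((hv v).choose_spec).symm
        have := (properCol_comp_iff E (Sum.inl : C → C ⊕ ZMod p) Sum.inl_injective
          (fun v => (hv v).choose))
        rw [hφeq] at this
        exact this.mp hφ
      · apply Subtype.ext
        apply Subtype.ext
        funext v
        exact ((hv v).choose_spec).symm
  exact hcard ▸ key

/-- The complete graph `K_m` as an `F`-weighted graph with all weights `1`. -/
def Kc (F : Type*) [Field F] (m : ℕ) : WGraph F where
  q := m
  α := fun _ => 1
  β := fun i j => if i = j then 0 else 1
  α_ne := fun _ => one_ne_zero

theorem Kc_twinFree (F : Type*) [Field F] (m : ℕ) : (Kc F m).TwinFree := by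
  intro i j h
  by_contra hij
  have h1 := (h i).1
  simp only [Kc] at h1
  change (if i = i then (0:F) else 1) = (if j = i then 0 else 1) at h1
  rw [if_pos rfl, if_neg (fun h' : j = i => hij h'.symm)] at h1
  exact zero_ne_one h1

open Classical in
theorem prod_ite_proper {F : Type*} [Field F] {V : Type*} (E : Multiset (V × V))
    {C : Type*} (φ : V → C) :
    (E.map fun e => if φ e.1 = φ e.2 then (0 : F) else 1).prod =
      if ProperCol E φ then 1 else 0 := by
  induction E using Multiset.induction with
  | empty => simp [ProperCol]
  | cons e E ih =>
    rw [Multiset.map_cons, Multiset.prod_cons, ih]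
    by_cases he : φ e.1 = φ e.2
    · have hnp : ¬ ProperCol (e ::ₘ E) φ := fun h => h e (Multiset.mem_cons_self e E) he
      rw [if_pos he, if_neg hnp]
      ring
    · rw [if_neg he, one_mul]
      by_cases hE : ProperCol E φ
      · have hP : ProperCol (e ::ₘ E) φ := by
          intro e' he'
          rcases Multiset.mem_cons.mp he' with h | h
          · subst h; exact he
          · exact hE e' h
        rw [if_pos hE, if_pos hP]
      · have hnP : ¬ ProperCol (e ::ₘ E) φ :=
          fun h => hE fun e' he' => h e' (Multiset.mem_cons_of_mem he')
        rw [if_neg hE, if_neg hnP]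

open Classical in
theorem homFull_Kc {F : Type*} [Field F] (m : ℕ) (G : LGraph 0) :
    (Kc F m).homFull G =
      (Nat.card {φ : Fin 0 ⊕ Fin G.n → Fin m // ProperCol G.edges φ} : F) := by
  unfold WGraph.homFull
  have hα : ∀ φ : (Fin 0 ⊕ Fin G.n) → Fin m,
      (∏ v : Fin 0 ⊕ Fin G.n, (Kc F m).α (φ v)) = 1 := by
    intro φ; simp [Kc]
  have hβ : ∀ φ : (Fin 0 ⊕ Fin G.n) → Fin m,
      (G.edges.map fun e => (Kc F m).β (φ e.1) (φ e.2)).prod =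
        if ProperCol G.edges φ then (1 : F) else 0 := by
    intro φ
    rw [← prod_ite_proper (F := F) G.edges φ]
    refine congrArg Multiset.prod (Multiset.map_congr rfl fun e _ => ?_)
    simp [Kc]
  calc (∑ φ : (Fin 0 ⊕ Fin G.n) → Fin (Kc F m).q,
        (∏ v, (Kc F m).α (φ v)) * (G.edges.map fun e => (Kc F m).β (φ e.1) (φ e.2)).prod)
      = ∑ φ : (Fin 0 ⊕ Fin G.n) → Fin m,
          (if ProperCol G.edges φ then (1 : F) else 0) := by
        refine Finset.sum_congr rfl fun φ _ => ?_
        rw [hα φ, hβ φ, one_mul]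
    _ = ((Finset.univ.filter fun φ : (Fin 0 ⊕ Fin G.n) → Fin m =>
          ProperCol G.edges φ).card : F) := by
        rw [Finset.sum_boole]
    _ = _ := by
        rw [Nat.card_eq_fintype_card, Fintype.card_subtype]

theorem card_proper_modEq {p : ℕ} (hp : p.Prime) {V : Type*} [Finite V]
    (E : Multiset (V × V)) :
    Nat.card {φ : V → Fin (1 + p) // ProperCol E φ} ≡
      Nat.card {φ : V → Fin (1 + 2 * p) // ProperCol E φ} [MOD p] := by
  haveI : NeZero p := ⟨hp.ne_zero⟩
  have e1 : Fin (1 + p) ≃ (Fin 1 ⊕ ZMod p) := by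
    apply Fintype.equivOfCardEq
    simp [ZMod.card]
  have e2 : Fin (1 + 2 * p) ≃ ((Fin 1 ⊕ ZMod p) ⊕ ZMod p) := by
    apply Fintype.equivOfCardEq
    simp [ZMod.card]; ring
  have h1 : Nat.card {φ : V → Fin (1 + p) // ProperCol E φ} ≡
      Nat.card {φ : V → Fin 1 // ProperCol E φ} [MOD p] := by
    rw [card_proper_congr E e1]
    exact card_proper_add_zmod hp E
  have h2 : Nat.card {φ : V → Fin (1 + 2 * p) // ProperCol E φ} ≡
      Nat.card {φ : V → Fin 1 // ProperCol E φ} [MOD p] := by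
    rw [card_proper_congr E e2]
    exact (card_proper_add_zmod hp E).trans (card_proper_add_zmod hp E)
  exact h1.trans h2.symm

/-- Over a field of positive characteristic, the Lovász-type isomorphism theorem
fails: there are non-isomorphic twin-free weighted graphs (in fact unweighted
simple graphs with all weights 1) with the same homomorphism counts. -/
theorem stmt_18 (F : Type*) [Field F] (p : ℕ) (hp : p.Prime) [CharP F p] :
    ∃ H H' : WGraph F, H.TwinFree ∧ H'.TwinFree ∧
      (∀ G : LGraph 0, H.homFull G = H'.homFull G) ∧ ¬ H.Isomorphic H' := by
  refine ⟨Kc F (1 + p), Kc F (1 + 2 * p), Kc_twinFree F _, Kc_twinFree F _, ?_, ?_⟩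
  · intro G
    rw [homFull_Kc, homFull_Kc]
    exact (CharP.natCast_eq_natCast F p).mpr (card_proper_modEq hp G.edges)
  · rintro ⟨σ, hbij, -, -⟩
    have hc := Fintype.card_of_bijective hbij
    simp only [Kc, Fintype.card_fin] at hc
    have := hp.pos
    change Fintype.card (Fin (1 + p)) = Fintype.card (Fin (1 + 2 * p)) at hc
    rw [Fintype.card_fin, Fintype.card_fin] at hc
    omega
end
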